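/- Let H be a connected k-uniform hypergraph with m ≥ 1 edges and signless Laplacian eigenpair (ρ, x). Then x(min) ≤ √(ρ/m) ≤ x(max). Moreover, if H is regular then both inequalities are equalities. -/

import Mathlib

open Finset Matrix

variable {V : Type*} [Fintype V] [DecidableEq V]

/-- The incidence matrix of a hypergraph with vertex type `V` and edge set `E`:
`B(v,e) = 1` if `v ∈ e` and `0` otherwise. -/
def inc (E : Finset (Finset V)) : Matrix V ↥E ℝ :=
  fun v e => if v ∈ (e : Finset V) then 1 else 0

/-- The signless Laplacian matrix `Q = B * Bᵀ`. -/
def signlessLap (E : Finset (Finset V)) : Matrix V V ℝ :=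
  inc E * (inc E)ᵀ

/-- The degree of a vertex: the number of edges containing it. -/
def deg (E : Finset (Finset V)) (v : V) : ℕ :=
  (E.filter fun e => v ∈ e).card

/-- A hypergraph is connected if the reflexive-transitive closure of the relation
"`u ≠ v` and some edge contains both `u` and `v`" relates every pair of vertices. -/
def HConnected (E : Finset (Finset V)) : Prop :=
  ∀ u v : V, Relation.ReflTransGen (fun a b => a ≠ b ∧ ∃ e ∈ E, a ∈ e ∧ b ∈ e) u v

/-- A hypergraph is regular if all vertices have the same degree. -/
def HRegular (E : Finset (Finset V)) : Prop :=
  ∃ r, ∀ v : V, deg E v = r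

/-- A signless Laplacian eigenpair `(ρ, x)`: `x` is entrywise positive,
normalized by `∑ v, x v ^ 2 = 1`, and `Q x = ρ x`. -/
def Eigenpair (E : Finset (Finset V)) (ρ : ℝ) (x : V → ℝ) : Prop :=
  (∀ v, 0 < x v) ∧ (∑ v, x v ^ 2 = 1) ∧ (signlessLap E).mulVec x = ρ • x

/-!
Since `ρ = xᵀ Q x = ∑ₑ x(e)²`, the quantity `√(ρ/m)` is the quadratic mean of the edge sums
`x(e)` and so lies between their minimum and maximum. If `H` is `r`-regular, the all-ones vector
is a positive eigenvector of the symmetric matrix `Q` for `k r`, hence `ρ = k r`. At a vertex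
where `x` is maximal the eigenvalue equation then forces `x` to be maximal on every incident
edge, so by connectedness `x` is constant, all edge sums coincide, and the two bounds meet.
-/

theorem le_sqrt_sum_sq_div_card {ι : Type*} {s : Finset ι} (hs : s.Nonempty) {f : ι → ℝ}
    {a : ℝ} (ha : 0 ≤ a) (h : ∀ i ∈ s, a ≤ f i) : a ≤ √((∑ i ∈ s, f i ^ 2) / #s) := by
  have hcard : (0 : ℝ) < #s := by exact_mod_cast hs.card_pos
  refine Real.le_sqrt_of_sq_le ((le_div_iff₀ hcard).2 ?_)
  calc a ^ 2 * #s = ∑ _i ∈ s, a ^ 2 := by rw [sum_const, nsmul_eq_mul, mul_comm]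
    _ ≤ ∑ i ∈ s, f i ^ 2 := sum_le_sum fun i hi => pow_le_pow_left₀ ha (h i hi) 2

theorem sqrt_sum_sq_div_card_le {ι : Type*} {s : Finset ι} (hs : s.Nonempty) {f : ι → ℝ}
    {b : ℝ} (h : ∀ i ∈ s, 0 ≤ f i ∧ f i ≤ b) : √((∑ i ∈ s, f i ^ 2) / #s) ≤ b := by
  have hcard : (0 : ℝ) < #s := by exact_mod_cast hs.card_pos
  obtain ⟨i, hi⟩ := hs
  refine Real.sqrt_le_iff.2 ⟨(h i hi).1.trans (h i hi).2, (div_le_iff₀ hcard).2 ?_⟩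
  calc ∑ i ∈ s, f i ^ 2 ≤ ∑ _i ∈ s, b ^ 2 :=
        sum_le_sum fun i hi => pow_le_pow_left₀ (h i hi).1 (h i hi).2 2
    _ = b ^ 2 * #s := by rw [sum_const, nsmul_eq_mul, mul_comm]

theorem Matrix.IsSymm.eigenvalue_eq_of_dotProduct_ne_zero {n R : Type*} [Fintype n]
    [CommRing R] [IsDomain R] {A : Matrix n n R} (hA : A.IsSymm) {x y : n → R} {a b : R}
    (hx : A *ᵥ x = a • x) (hy : A *ᵥ y = b • y) (hxy : x ⬝ᵥ y ≠ 0) : a = b := by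
  refine mul_right_cancel₀ hxy ?_
  calc a * (x ⬝ᵥ y) = (A *ᵥ x) ⬝ᵥ y := by rw [hx, smul_dotProduct, smul_eq_mul]
    _ = x ⬝ᵥ (A *ᵥ y) := by
      rw [dotProduct_comm, dotProduct_mulVec, ← mulVec_transpose, hA.eq, dotProduct_comm]
    _ = b * (x ⬝ᵥ y) := by rw [hy, dotProduct_smul, smul_eq_mul]

theorem inc_transpose_mulVec (E : Finset (Finset V)) (x : V → ℝ) :
    (inc E)ᵀ *ᵥ x = fun e : E => ∑ v ∈ (e : Finset V), x v := by
  funext e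
  simp [mulVec, dotProduct, inc, ite_mul, sum_ite_mem]

theorem signlessLap_mulVec_apply (E : Finset (Finset V)) (x : V → ℝ) (v : V) :
    (signlessLap E *ᵥ x) v = ∑ e ∈ E with v ∈ e, ∑ w ∈ e, x w := by
  rw [signlessLap, ← mulVec_mulVec, inc_transpose_mulVec, sum_filter,
    ← sum_coe_sort E]
  simp [mulVec, dotProduct, inc]

theorem dotProduct_signlessLap_mulVec (E : Finset (Finset V)) (x : V → ℝ) :
    x ⬝ᵥ (signlessLap E *ᵥ x) = ∑ e ∈ E, (∑ v ∈ e, x v) ^ 2 := by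
  rw [signlessLap, ← mulVec_mulVec, dotProduct_mulVec, ← mulVec_transpose,
    inc_transpose_mulVec, ← sum_coe_sort E]
  simp [dotProduct, sq]

theorem signlessLap_mulVec_one {k r : ℕ} {E : Finset (Finset V)}
    (hunif : ∀ e ∈ E, e.card = k) (hr : ∀ v, deg E v = r) :
    signlessLap E *ᵥ 1 = ((k * r : ℕ) : ℝ) • 1 := by
  funext v
  rw [signlessLap_mulVec_apply, sum_congr rfl fun e he => by
    rw [Pi.one_def, sum_const, hunif e (mem_filter.1 he).1]]
  simp [← hr v, deg, mul_comm]

theorem HConnected.forall_of_closed {α : Type*} {E : Finset (Finset α)} (hconn : HConnected E)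
    {P : α → Prop} (hP : ∀ e ∈ E, ∀ u ∈ e, ∀ w ∈ e, P u → P w) {v : α} (hv : P v) (u : α) :
    P u := by
  induction hconn v u with
  | refl => exact hv
  | tail _ hstep ih =>
    obtain ⟨-, e, he, hb, hc⟩ := hstep
    exact hP e he _ hb _ hc ih

/-- The `r` edge sums at `v` are each at most `k * x v`, and by the eigenvalue equation they add
up to `k * r * x v`, so every inequality is tight. -/
theorem eq_of_mem_edge_of_forall_le {k r : ℕ} {E : Finset (Finset V)} {x : V → ℝ}
    (hunif : ∀ e ∈ E, e.card = k) (hr : ∀ v, deg E v = r)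
    (heig : signlessLap E *ᵥ x = ((k * r : ℕ) : ℝ) • x) {v : V} (hmax : ∀ u, x u ≤ x v)
    {e : Finset V} (he : e ∈ E) (hv : v ∈ e) {w : V} (hw : w ∈ e) : x w = x v := by
  have hedge : ∀ f ∈ E, ∑ u ∈ f, x u ≤ ∑ _u ∈ f, x v := fun f _ => sum_le_sum fun u _ => hmax u
  have hdeg : #{f ∈ E | v ∈ f} = r := hr v
  have hsum : ∑ f ∈ E with v ∈ f, ∑ u ∈ f, x u = ∑ f ∈ E with v ∈ f, ∑ _u ∈ f, x v := by
    rw [← signlessLap_mulVec_apply, heig,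
      sum_congr rfl fun f hf => by rw [sum_const, hunif f (mem_filter.1 hf).1], sum_const, hdeg]
    simp only [Pi.smul_apply, smul_eq_mul, nsmul_eq_mul]
    push_cast
    ring
  have hedge_eq := (sum_eq_sum_iff_of_le fun f hf => hedge f (mem_filter.1 hf).1).1 hsum e
    (mem_filter.2 ⟨he, hv⟩)
  exact (sum_eq_sum_iff_of_le fun u _ => hmax u).1 hedge_eq w hw

namespace Eigenpair

variable {E : Finset (Finset V)} {ρ : ℝ} {x : V → ℝ}

theorem univ_nonempty (hx : Eigenpair E ρ x) : (univ : Finset V).Nonempty :=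
  nonempty_of_sum_ne_zero (by rw [hx.2.1]; exact one_ne_zero)

theorem eigenvalue_eq_sum_sq (hx : Eigenpair E ρ x) : ρ = ∑ e ∈ E, (∑ v ∈ e, x v) ^ 2 := by
  obtain ⟨-, hnorm, heig⟩ := hx
  rw [← dotProduct_signlessLap_mulVec, heig, dotProduct_smul, smul_eq_mul]
  simp [dotProduct, ← sq, hnorm]

theorem eigenvalue_eq_of_regular {k r : ℕ} (hx : Eigenpair E ρ x)
    (hunif : ∀ e ∈ E, e.card = k) (hr : ∀ v, deg E v = r) : ρ = (k * r : ℕ) := by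
  have hsymm : (signlessLap E).IsSymm := by
    rw [signlessLap, IsSymm, transpose_mul, transpose_transpose]
  refine hsymm.eigenvalue_eq_of_dotProduct_ne_zero hx.2.2
    (signlessLap_mulVec_one hunif hr) (ne_of_gt ?_)
  simpa [dotProduct] using sum_pos (fun v _ => hx.1 v) hx.univ_nonempty

theorem exists_const_of_regular (hx : Eigenpair E ρ x) {k : ℕ} (hunif : ∀ e ∈ E, e.card = k)
    (hconn : HConnected E) (hreg : HRegular E) : ∃ c, ∀ v, x v = c := by
  obtain ⟨r, hr⟩ := hreg
  have heig := hx.2.2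
  rw [hx.eigenvalue_eq_of_regular hunif hr] at heig
  have : Nonempty V := univ_nonempty_iff.1 hx.univ_nonempty
  obtain ⟨v, hv⟩ := Finite.exists_max x
  refine ⟨x v, hconn.forall_of_closed (P := (x · = x v)) ?_ rfl⟩
  intro e he u hu w hw hxu
  exact (eq_of_mem_edge_of_forall_le hunif hr heig (hxu ▸ hv) he hu hw).trans hxu

end Eigenpair

theorem edge_sum_extremes_vs_sqrt_rho_div_m_general {V : Type*} [Fintype V] [DecidableEq V]
    (k : ℕ) (E : Finset (Finset V)) (hunif : ∀ e ∈ E, e.card = k)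
    (hconn : HConnected E) (hE : E.Nonempty)
    (ρ : ℝ) (x : V → ℝ) (hx : Eigenpair E ρ x)
    (xemin xemax : ℝ)
    (hemin : IsLeast ((fun e : Finset V => ∑ v ∈ e, x v) '' ↑E) xemin)
    (hemax : IsGreatest ((fun e : Finset V => ∑ v ∈ e, x v) '' ↑E) xemax) :
    (xemin ≤ Real.sqrt (ρ / E.card) ∧ Real.sqrt (ρ / E.card) ≤ xemax) ∧
      (HRegular E →
        xemin = Real.sqrt (ρ / E.card) ∧ Real.sqrt (ρ / E.card) = xemax) := by
  have hnonneg : ∀ e ∈ E, 0 ≤ ∑ v ∈ e, x v := fun e _ => sum_nonneg fun v _ => (hx.1 v).le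
  obtain ⟨emin, heminE, rfl⟩ := hemin.1
  obtain ⟨emax, hemaxE, rfl⟩ := hemax.1
  have hbounds : ∑ v ∈ emin, x v ≤ Real.sqrt (ρ / E.card) ∧
      Real.sqrt (ρ / E.card) ≤ ∑ v ∈ emax, x v := by
    rw [hx.eigenvalue_eq_sum_sq]
    exact ⟨le_sqrt_sum_sq_div_card hE (hnonneg emin heminE) fun e he => hemin.2 ⟨e, he, rfl⟩,
      sqrt_sum_sq_div_card_le hE fun e he => ⟨hnonneg e he, hemax.2 ⟨e, he, rfl⟩⟩⟩
  refine ⟨hbounds, fun hreg => ?_⟩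
  obtain ⟨c, hc⟩ := hx.exists_const_of_regular hunif hconn hreg
  have hmax_le_min : ∑ v ∈ emax, x v ≤ ∑ v ∈ emin, x v := by
    simp only [hc, sum_const, hunif emin heminE, hunif emax hemaxE, le_refl]
  exact ⟨by linarith, by linarith⟩

/-- For a connected `k`-graph with `m ≥ 1` edges and signless Laplacian eigenpair
`(ρ, x)`: `x(min) ≤ √(ρ/m) ≤ x(max)`; if `H` is regular both are equalities.
Here `x(e) = ∑ v ∈ e, x v`. -/
theorem edge_sum_extremes_vs_sqrt_rho_div_m {V : Type*} [Fintype V] [DecidableEq V]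
    (k : ℕ) (hk : 2 ≤ k) (E : Finset (Finset V)) (hunif : ∀ e ∈ E, e.card = k)
    (hconn : HConnected E) (hE : E.Nonempty)
    (ρ : ℝ) (x : V → ℝ) (hx : Eigenpair E ρ x)
    (xemin xemax : ℝ)
    (hemin : IsLeast ((fun e : Finset V => ∑ v ∈ e, x v) '' ↑E) xemin)
    (hemax : IsGreatest ((fun e : Finset V => ∑ v ∈ e, x v) '' ↑E) xemax) :
    (xemin ≤ Real.sqrt (ρ / E.card) ∧ Real.sqrt (ρ / E.card) ≤ xemax) ∧
      (HRegular E →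
        xemin = Real.sqrt (ρ / E.card) ∧ Real.sqrt (ρ / E.card) = xemax) :=
  edge_sum_extremes_vs_sqrt_rho_div_m_general k E hunif hconn hE ρ x hx xemin xemax hemin hemax
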